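/- For every session behaviour σ, the set R = { σ' | σ ⟹ σ' and σ' has no further unlabelled transitions } is a singleton, and its unique element is either 1, or an external choice a₁.σ₁ + ⋯ + aₙ.σₙ, or σ itself when σ is an internal choice; in particular R is nonempty and finite. -/

import Mathlib

/-- Names of actions. -/
abbrev Name := ℕ

/-- Session behaviours (raw behaviour expressions), with de Bruijn variables.
    `ext l` is an external choice `a₁.σ₁ + ⋯ + aₙ.σₙ`,
    `int l` is an internal choice `ā₁.σ₁ ⊕ ⋯ ⊕ āₙ.σₙ` (a singleton is an output prefix `ā.σ`),
    `fix σ` is `rec x.σ`. -/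
inductive SB : Type where
  | one : SB
  | ext : List (Name × SB) → SB
  | int : List (Name × SB) → SB
  | var : ℕ → SB
  | fix : SB → SB

namespace SB

mutual
/-- Substitution of the (closed) term `t` for de Bruijn variable `k`. -/
def subst (t : SB) : SB → ℕ → SB
  | .one, _ => .one
  | .var n, k => if n = k then t else .var n
  | .ext l, k => .ext (substL t l k)
  | .int l, k => .int (substL t l k)
  | .fix σ, k => .fix (subst t σ (k + 1))
def substL (t : SB) : List (Name × SB) → ℕ → List (Name × SB)
  | [], _ => []
  | p :: l, k => (p.1, subst t p.2 k) :: substL t l k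
end

mutual
/-- Syntactic duality: interchange inputs with outputs, `+` with `⊕`. -/
def dual : SB → SB
  | .one => .one
  | .var n => .var n
  | .ext l => .int (dualL l)
  | .int l => .ext (dualL l)
  | .fix σ => .fix (dual σ)
def dualL : List (Name × SB) → List (Name × SB)
  | [] => []
  | p :: l => (p.1, dual p.2) :: dualL l
end

/-- All free variables are `< k`. -/
inductive ClosedAt : ℕ → SB → Prop where
  | one : ∀ {k}, ClosedAt k .one
  | var : ∀ {k n}, n < k → ClosedAt k (.var n)
  | ext : ∀ {k l}, (∀ p ∈ l, ClosedAt k p.2) → ClosedAt k (.ext l)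
  | int : ∀ {k l}, (∀ p ∈ l, ClosedAt k p.2) → ClosedAt k (.int l)
  | fix : ∀ {k σ}, ClosedAt (k + 1) σ → ClosedAt k (.fix σ)

/-- Guardedness: after stripping `rec`s one reaches a prefix/choice constructor (not a variable). -/
inductive Guarded : SB → Prop where
  | one : Guarded .one
  | ext : ∀ {l}, Guarded (.ext l)
  | int : ∀ {l}, Guarded (.int l)
  | fix : ∀ {σ}, Guarded σ → Guarded (.fix σ)

/-- Well-formedness: choices are nonempty with pairwise distinct names, recursion is guarded. -/
inductive WF : SB → Prop where
  | one : WF .one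
  | var : ∀ {n}, WF (.var n)
  | ext : ∀ {l}, l ≠ [] → (l.map Prod.fst).Nodup → (∀ p ∈ l, WF p.2) → WF (.ext l)
  | int : ∀ {l}, l ≠ [] → (l.map Prod.fst).Nodup → (∀ p ∈ l, WF p.2) → WF (.int l)
  | fix : ∀ {σ}, Guarded σ → WF σ → WF (.fix σ)

/-- `σ` is a session behaviour: well formed and closed. -/
def SBok (σ : SB) : Prop := WF σ ∧ ClosedAt 0 σ

/-- Visible actions. -/
inductive Act : Type where
  | inp : Name → Act
  | out : Name → Act
deriving DecidableEq

/-- The dual action. -/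
def Act.dualAct : Act → Act
  | .inp a => .out a
  | .out a => .inp a

/-- Unlabelled transitions: internal-choice selection (of a genuine choice, `n ≥ 2`)
    and recursion unfolding. -/
inductive Red : SB → SB → Prop where
  | sel : ∀ {l} {p : Name × SB}, 2 ≤ l.length → p ∈ l → Red (.int l) (.int [p])
  | unf : ∀ {σ}, Red (.fix σ) (subst (.fix σ) σ 0)

/-- Recursion-unfolding steps only. -/
inductive URed : SB → SB → Prop where
  | unf : ∀ {σ}, URed (.fix σ) (subst (.fix σ) σ 0)

def RedStar : SB → SB → Prop := Relation.ReflTransGen Red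

/-- Labelled transitions. -/
inductive Step : SB → Act → SB → Prop where
  | inp : ∀ {l a σ}, (a, σ) ∈ l → Step (.ext l) (.inp a) σ
  | out : ∀ {a σ}, Step (.int [(a, σ)]) (.out a) σ

/-- Weak labelled transition `σ ⟹α σ'`. -/
def VStep (σ : SB) (α : Act) (σ' : SB) : Prop := ∃ σ₁, RedStar σ σ₁ ∧ Step σ₁ α σ'

/-- The client can weakly perform the input `a`. -/
def WInp (ρ : SB) (a : Name) : Prop := ∃ ρ', VStep ρ (.inp a) ρ'

/-- Synchronization actions. -/
inductive SyncAct : Type where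
  | tau : SyncAct
  | skp : SyncAct
deriving DecidableEq

/-- Unlabelled steps of a client/server pair. -/
inductive PRed : SB × SB → SB × SB → Prop where
  | left : ∀ {ρ ρ' σ}, Red ρ ρ' → PRed (ρ, σ) (ρ', σ)
  | right : ∀ {ρ σ σ'}, Red σ σ' → PRed (ρ, σ) (ρ, σ')

/-- Labelled steps of a client/server pair: `τ` handshake of dual actions, and
    `skp`, discarding a server output `ā` that the client cannot weakly input. -/
inductive PLab : SB × SB → SyncAct → SB × SB → Prop where
  | tau : ∀ {ρ ρ' σ σ' α}, Step ρ α ρ' → Step σ α.dualAct σ' → PLab (ρ, σ) .tau (ρ', σ')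
  | skp : ∀ {ρ σ σ' a}, ¬ WInp ρ a → Step σ (.out a) σ' → PLab (ρ, σ) .skp (ρ, σ')

def PRedStar : SB × SB → SB × SB → Prop := Relation.ReflTransGen PRed

/-- `q ⟹ξ q'` : a `ξ`-labelled step up to unlabelled steps. -/
def SyncStep (q : SB × SB) (ξ : SyncAct) (q' : SB × SB) : Prop :=
  ∃ q₁ q₂, PRedStar q q₁ ∧ PLab q₁ ξ q₂ ∧ PRedStar q₂ q'

def SyncReach : SB × SB → SB × SB → Prop :=
  Relation.ReflTransGen (fun q q' => ∃ ξ, SyncStep q ξ q')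

/-- An infinite sequence of synchronization actions is definitely-skp. -/
def DefinitelySkp (ξs : ℕ → SyncAct) : Prop := ∃ k, ∀ h, k < h → ξs h = SyncAct.skp

/-- skp-compliance `ρ ⊣skp σ`: every finite synchronization trace ends in success
    (the client is `1` whenever no further synchronization step is possible), and
    no infinite synchronization trace (with the client never equal to `1`) is definitely-skp. -/
def Compliant (ρ σ : SB) : Prop :=
  (∀ q, SyncReach (ρ, σ) q → q.1 ≠ SB.one → ∃ ξ q', SyncStep q ξ q') ∧
  (∀ (f : ℕ → SB × SB) (ξs : ℕ → SyncAct),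
      f 0 = (ρ, σ) → (∀ n, SyncStep (f n) (ξs n) (f (n + 1))) →
      (∀ n, (f n).1 ≠ SB.one) → ¬ DefinitelySkp ξs)

/-- Standard compliance `ρ ⊣ σ`: only `τ` handshakes; every reachable stuck state
    has client `1`. -/
def StdCompliant (ρ σ : SB) : Prop :=
  ∀ q, Relation.ReflTransGen (fun x y => PRed x y ∨ PLab x SyncAct.tau y) (ρ, σ) q →
    (∀ q', ¬ (PRed q q' ∨ PLab q SyncAct.tau q')) → q.1 = SB.one

/-- skp-subbehaviour: every skp-compliant client of `σ` is one of `σ'`. -/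
def SubB (σ σ' : SB) : Prop := ∀ ρ, SBok ρ → Compliant ρ σ → Compliant ρ σ'

/-- Standard subbehaviour. -/
def SubStd (σ σ' : SB) : Prop := ∀ ρ, SBok ρ → StdCompliant ρ σ → StdCompliant ρ σ'

/-- `ρ ⇓ r`: `r` is the (unique) stuck term reached from `ρ` by unfolding recursion. -/
def Conv (ρ r : SB) : Prop :=
  Relation.ReflTransGen URed ρ r ∧ ∀ r', ¬ URed r r'

/-- Finite maximal traces of visible actions. -/
inductive FTrace : SB → List Act → Prop where
  | nil : ∀ {σ}, (∀ α σ', ¬ VStep σ α σ') → FTrace σ []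
  | cons : ∀ {σ σ' α tr}, VStep σ α σ' → FTrace σ' tr → FTrace σ (α :: tr)

/-- `Syncable α σ`: every (finite maximal or infinite) trace of the server `σ` consists of a
    finite prefix of outputs, none equal to the dual of `α`, followed by the dual of `α`. -/
def Syncable (α : Act) (σ : SB) : Prop :=
  (∀ tr, FTrace σ tr →
      ∃ pre post, tr = pre ++ α.dualAct :: post ∧
        ∀ β ∈ pre, (∃ b, β = Act.out b) ∧ β ≠ α.dualAct) ∧
  (∀ (f : ℕ → SB) (g : ℕ → Act), f 0 = σ → (∀ n, VStep (f n) (g n) (f (n + 1))) →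
      ∃ n, g n = α.dualAct ∧ ∀ m, m < n → (∃ b, g m = Act.out b) ∧ g m ≠ α.dualAct)

/-- `q ⟹skp* τ q'`. -/
def SkpsTau (q q' : SB × SB) : Prop :=
  ∃ q₁, Relation.ReflTransGen (fun x y => SyncStep x SyncAct.skp y) q q₁ ∧
    SyncStep q₁ SyncAct.tau q'

/-- The coinductive skip-compliance operator `H`. -/
def Hop (R : SB × SB → Prop) (q : SB × SB) : Prop :=
  Conv q.1 .one ∨
  ((∀ l, Conv q.1 (.ext l) →
      (∃ p ∈ l, Syncable (.inp p.1) q.2) ∧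
      ∀ p ∈ l, ∀ σ', SkpsTau (.ext [p], q.2) (p.2, σ') → R (p.2, σ')) ∧
   (∀ l, Conv q.1 (.int l) →
      (∀ p ∈ l, Syncable (.out p.1) q.2) ∧
      ∀ p ∈ l, ∀ σ', SkpsTau (.int [p], q.2) (p.2, σ') → R (p.2, σ')))

end SB

/-- The relation `⊑` on (nonempty) finite sequences of names. -/
inductive SubSeq {α : Type} : List α → List α → Prop where
  | single : ∀ {b : α} {pre : List α}, b ∉ pre → SubSeq [b] (pre ++ [b])
  | cons : ∀ {b : α} {pre u v : List α}, b ∉ pre → SubSeq u v → SubSeq (b :: u) (pre ++ b :: v)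

open SB

/-- The set of stuck terms reachable by unlabelled steps. -/
def RSet (σ : SB) : Set SB :=
  {r | Relation.ReflTransGen SB.URed σ r ∧ ∀ r', ¬ SB.URed r r'}

/-! Unfolding a guarded `rec` strictly decreases the number of leading `rec`s, so unfolding
terminates, and it is deterministic, so the stuck term it reaches is unique. Guardedness also
rules out a variable at the head of that term, and an internal choice is already stuck. -/

theorem Relation.ReflTransGen.eq_of_rightUnique_of_stuck {α : Type*} {r : α → α → Prop}
    {a b c : α} (hr : Relator.RightUnique r) (hab : ReflTransGen r a b)
    (hac : ReflTransGen r a c) (hb : ∀ d, ¬ r b d) (hc : ∀ d, ¬ r c d) : b = c := by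
  have eq_of_stuck {x y : α} (hxy : ReflTransGen r x y) (hx : ∀ d, ¬ r x d) : x = y := by
    rcases hxy.cases_head with rfl | ⟨d, hxd, -⟩
    · rfl
    · exact absurd hxd (hx d)
  rcases hab.total_of_right_unique hr hac with hbc | hcb
  · exact eq_of_stuck hbc hb
  · exact (eq_of_stuck hcb hc).symm

namespace SB

def fixDepth : SB → ℕ
  | .fix σ => fixDepth σ + 1
  | _ => 0

theorem URed.rightUnique : Relator.RightUnique URed := by
  rintro _ _ _ ⟨⟩ ⟨⟩
  rfl

theorem Guarded.subst {σ : SB} (h : Guarded σ) (t : SB) (k : ℕ) :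
    Guarded (SB.subst t σ k) := by
  induction h generalizing k with
  | one => exact .one
  | ext => exact .ext
  | int => exact .int
  | fix _ ih => exact .fix (ih _)

theorem Guarded.fixDepth_subst {σ : SB} (h : Guarded σ) (t : SB) (k : ℕ) :
    fixDepth (SB.subst t σ k) = fixDepth σ := by
  induction h generalizing k with
  | one | ext | int => rfl
  | fix _ ih => simp only [SB.subst, fixDepth, ih]

theorem Guarded.of_ured {σ τ : SB} (h : Guarded σ) (hστ : URed σ τ) :
    Guarded τ ∧ fixDepth τ < fixDepth σ := by
  obtain ⟨⟩ := hστ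
  cases h with
  | fix h => exact ⟨h.subst _ _, by simp [h.fixDepth_subst, fixDepth]⟩

theorem Guarded.exists_stuck {σ : SB} (h : Guarded σ) :
    ∃ r, Relation.ReflTransGen URed σ r ∧ Guarded r ∧ ∀ r', ¬ URed r r' := by
  induction hn : fixDepth σ using Nat.strong_induction_on generalizing σ with
  | _ n ih =>
    by_cases hstuck : ∃ τ, URed σ τ
    · obtain ⟨τ, hστ⟩ := hstuck
      obtain ⟨hτ, hlt⟩ := h.of_ured hστ
      obtain ⟨r, hτr, hr⟩ := ih _ (hn ▸ hlt) hτ rfl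
      exact ⟨r, .head hστ hτr, hr⟩
    · exact ⟨σ, .refl, h, not_exists.mp hstuck⟩

theorem Guarded.eq_one_or_ext_or_int_of_stuck {r : SB} (h : Guarded r)
    (hr : ∀ r', ¬ URed r r') : r = .one ∨ (∃ l, r = .ext l) ∨ (∃ l, r = .int l) := by
  cases h with
  | one => exact .inl rfl
  | ext => exact .inr (.inl ⟨_, rfl⟩)
  | int => exact .inr (.inr ⟨_, rfl⟩)
  | fix => exact absurd .unf (hr _)

theorem SBok.guarded {σ : SB} (h : SBok σ) : Guarded σ := by
  obtain ⟨hwf, hc⟩ := h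
  cases hwf with
  | one => exact .one
  | var => cases hc with | var h => exact absurd h (Nat.not_lt_zero _)
  | ext => exact .ext
  | int => exact .int
  | fix hg => exact .fix hg

end SB

/-- for every session behaviour σ, `RSet σ` is a singleton whose
    unique element is `1`, an external choice, or an internal choice (σ itself
    when σ is an internal choice); in particular it is nonempty and finite. -/
theorem RSet_singleton : ∀ σ : SB, SBok σ →
    ∃ r, RSet σ = {r} ∧
      (r = SB.one ∨ (∃ l, r = SB.ext l) ∨ (∃ l, r = SB.int l)) ∧
      (∀ l, σ = SB.int l → r = σ) ∧
      (RSet σ).Finite ∧ (RSet σ).Nonempty := by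
  intro σ hσ
  obtain ⟨r, hσr, hr, hr_stuck⟩ := hσ.guarded.exists_stuck
  have hRSet : RSet σ = {r} :=
    Set.eq_singleton_iff_unique_mem.mpr ⟨⟨hσr, hr_stuck⟩, fun x ⟨hσx, hx⟩ =>
      hσx.eq_of_rightUnique_of_stuck URed.rightUnique hσr hx hr_stuck⟩
  refine ⟨r, hRSet, hr.eq_one_or_ext_or_int_of_stuck hr_stuck, ?_, ?_, ?_⟩
  · rintro l rfl
    have hint : SB.int l ∈ RSet (SB.int l) := ⟨.refl, fun _ h => nomatch h⟩
    exact (hRSet ▸ hint).symm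
  · exact hRSet ▸ Set.finite_singleton r
  · exact hRSet ▸ Set.singleton_nonempty r
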